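/- Let G be a quasi-acyclic 2-path-bounded oriented graph without multiple edges and triangles, and let R be any complete system of relations for G. Let R_N ⊆ R be the subset of relations in which both sides contain at least one non-loop edge. Then |R_N| ≥ 𝔯𝔥(G). -/

import Mathlib

/-- An oriented graph: finite nonempty sets of vertices and edges with
origin and tail maps. -/
structure OrientedGraph where
  V : Type
  E : Type
  [fintypeV : Fintype V]
  [fintypeE : Fintype E]
  [nonemptyV : Nonempty V]
  [nonemptyE : Nonempty E]
  o : E → V
  t : E → V

attribute [instance] OrientedGraph.fintypeV OrientedGraph.fintypeE
  OrientedGraph.nonemptyV OrientedGraph.nonemptyE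

namespace OrientedGraph

variable (G : OrientedGraph)

/-- `G.IsPath p u v` : the edge sequence `p` is a path from `u` to `v`
(consecutive edges are composable; paths of length 0 at any vertex are allowed). -/
def IsPath (p : List G.E) (u v : G.V) : Prop :=
  List.Chain' (fun e f => G.t e = G.o f) p ∧
  ((p = [] ∧ u = v) ∨
    ∃ h : p ≠ [], u = G.o (p.head h) ∧ v = G.t (p.getLast h))

/-- The label of an edge sequence: the product of the labels of its edges
(the empty sequence maps to `1`). -/
def labelProd {M : Type} [Monoid M] (l : G.E → M) (s : List G.E) : M :=
  (s.map l).prod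

/-- The diagram `(G, l)` is commutative: any two paths with the same origin and
the same tail have equal labels. -/
def IsCommutative {M : Type} [Monoid M] (l : G.E → M) : Prop :=
  ∀ (u v : G.V) (p₁ p₂ : List G.E),
    G.IsPath p₁ u v → G.IsPath p₂ u v → G.labelProd l p₁ = G.labelProd l p₂

/-- A complete system of relations for `G`: for every monoid `M` and every
labeling `l : E → M`, the diagram `(G, l)` is commutative iff all relations hold. -/
def IsComplete (R : Finset (List G.E × List G.E)) : Prop :=
  ∀ (M : Type) [Monoid M], ∀ l : G.E → M,
    G.IsCommutative l ↔ ∀ r ∈ R, G.labelProd l r.1 = G.labelProd l r.2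

/-- A minimal complete system of relations: no proper subset is complete. -/
def IsMinimalComplete (R : Finset (List G.E × List G.E)) : Prop :=
  G.IsComplete R ∧ ∀ R' : Finset (List G.E × List G.E), R' ⊂ R → ¬ G.IsComplete R'

/-- The commutativity rank `η(G)`: the minimal cardinality of a complete
system of relations for `G`. -/
noncomputable def eta : ℕ :=
  sInf {n : ℕ | ∃ R : Finset (List G.E × List G.E), G.IsComplete R ∧ R.card = n}

/-- `S'` is obtained from `S` by one multiplication. -/
def MulStep (S S' : Set (List G.E)) : Prop :=
  ∃ s ∈ S, ∃ s' ∈ S, S' = S ∪ {s ++ s'}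

/-- `G.mCost S S'` : the minimal number of multiplications needed to obtain `S'`
from `S` (`⊤` if impossible). -/
noncomputable def mCost (S S' : Set (List G.E)) : ℕ∞ :=
  sInf {k : ℕ∞ | ∃ n : ℕ, k = n ∧ ∃ f : ℕ → Set (List G.E),
    f 0 = S ∧ f n = S' ∧ ∀ i < n, G.MulStep (f i) (f (i + 1))}

/-- `S_R`: the set of all edge sequences appearing in the relations of `R`. -/
def relSet (R : Finset (List G.E × List G.E)) : Set (List G.E) :=
  {s | ∃ r ∈ R, s = r.1 ∨ s = r.2}

/-- `ℰ`: the empty sequence together with all one-edge sequences. -/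
def baseSet : Set (List G.E) :=
  {s | s = [] ∨ ∃ e : G.E, s = [e]}

/-- `m(R)`: the minimal number of multiplications needed to build all sequences
appearing in `R`, starting from `ℰ`. -/
noncomputable def mRel (R : Finset (List G.E × List G.E)) : ℕ∞ :=
  sInf {k : ℕ∞ | ∃ S : Set (List G.E), G.relSet R ⊆ S ∧ k = G.mCost G.baseSet S}

/-- The multiplication rank `ν(G)`. -/
noncomputable def nu : ℕ∞ :=
  sInf {k : ℕ∞ | ∃ R : Finset (List G.E × List G.E), G.IsComplete R ∧ k = G.mRel R}

/-- A 4-tuple of edges `(a, b, c, d)` forms a rhomboid. -/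
def IsRhomboid (r : G.E × G.E × G.E × G.E) : Prop :=
  G.o r.1 = G.o r.2.2.1 ∧ G.t r.2.1 = G.t r.2.2.2 ∧
  G.t r.1 = G.o r.2.1 ∧ G.t r.2.2.1 = G.o r.2.2.2 ∧
  G.o r.1 ≠ G.t r.1 ∧ G.o r.1 ≠ G.o r.2.2.2 ∧ G.o r.1 ≠ G.t r.2.2.2 ∧
  G.t r.1 ≠ G.o r.2.2.2 ∧ G.t r.1 ≠ G.t r.2.2.2 ∧ G.o r.2.2.2 ≠ G.t r.2.2.2

/-- Two rhomboids `(a, b, c, d)` and `(a', b', c', d')` are disjoint. -/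
def RhDisjoint (r r' : G.E × G.E × G.E × G.E) : Prop :=
  (r.1 ≠ r'.1 ∨ r.2.1 ≠ r'.2.1) ∧
  (r.1 ≠ r'.2.2.1 ∨ r.2.1 ≠ r'.2.2.2) ∧
  (r.2.2.1 ≠ r'.2.2.1 ∨ r.2.2.2 ≠ r'.2.2.2) ∧
  (r.2.2.1 ≠ r'.1 ∨ r.2.2.2 ≠ r'.2.1)

/-- `𝔯𝔥(G)`: the maximal cardinality of a family of pairwise disjoint rhomboids in `G`. -/
noncomputable def rhNum : ℕ :=
  sSup {n : ℕ | ∃ F : Finset (G.E × G.E × G.E × G.E),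
    (∀ r ∈ F, G.IsRhomboid r) ∧
    (∀ r ∈ F, ∀ r' ∈ F, r ≠ r' → G.RhDisjoint r r') ∧ F.card = n}

/-- `𝔏(G)`: the number of loops of `G`. -/
noncomputable def loopCount : ℕ :=
  Nat.card {e : G.E // G.o e = G.t e}

/-- `G` is quasi-acyclic: no directed cycle visiting two or more distinct vertices. -/
def QuasiAcyclic : Prop :=
  ∀ u v : G.V, u ≠ v →
    ∀ p q : List G.E, G.IsPath p u v → G.IsPath q v u → False

/-- `G` is 2-path-bounded: every oriented path avoiding loop edges has length at most 2. -/
def TwoPathBounded : Prop :=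
  ∀ (p : List G.E) (u v : G.V), G.IsPath p u v →
    (∀ e ∈ p, G.o e ≠ G.t e) → p.length ≤ 2

/-- `G` has a pair of multiple edges. -/
def HasMultipleEdges : Prop :=
  ∃ e e' : G.E, e ≠ e' ∧ G.t e = G.t e' ∧ G.o e = G.o e' ∧ G.t e ≠ G.o e

/-- `G` has a triangle. -/
def HasTriangle : Prop :=
  ∃ a b c : G.E, G.o a = G.o b ∧ G.t b = G.o c ∧ G.t c = G.t a ∧
    G.o a ≠ G.t a ∧ G.o b ≠ G.t b ∧ G.o c ≠ G.t c

/-- `G` has no loops. -/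
def NoLoops : Prop := ∀ e : G.E, G.o e ≠ G.t e

/-- Every edge occurring on either side of the relation `r` is a loop. -/
def AllLoops (r : List G.E × List G.E) : Prop :=
  (∀ e ∈ r.1, G.o e = G.t e) ∧ (∀ e ∈ r.2, G.o e = G.t e)

/-- Both sides of the relation `r` contain at least one non-loop edge. -/
def BothSidesNonLoop (r : List G.E × List G.E) : Prop :=
  (∃ e ∈ r.1, G.o e ≠ G.t e) ∧ (∃ e ∈ r.2, G.o e ≠ G.t e)

end OrientedGraph

/-- The triploid `T(n₁, n₂, n₃, n₀, e)`. -/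
def Triploid (n₁ n₂ n₃ n₀ e : ℕ) (hn₁ : 0 < n₁) (he : n₂ * (n₁ + n₃) ≤ e)
    (he₀ : 0 < e) : OrientedGraph where
  V := Fin n₀ ⊕ Fin n₁ ⊕ Fin n₂ ⊕ Fin n₃
  E := (Fin n₁ × Fin n₂) ⊕ (Fin n₂ × Fin n₃) ⊕ Fin (e - n₂ * (n₁ + n₃))
  nonemptyV := ⟨Sum.inr (Sum.inl ⟨0, hn₁⟩)⟩
  nonemptyE := by
    by_cases h : n₂ * (n₁ + n₃) < e
    · exact ⟨Sum.inr (Sum.inr ⟨0, by omega⟩)⟩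
    · have h2 : 0 < n₂ := by
        rcases Nat.eq_zero_or_pos n₂ with h0 | h0
        · exfalso; subst h0; simp at h; omega
        · exact h0
      exact ⟨Sum.inl (⟨0, hn₁⟩, ⟨0, h2⟩)⟩
  o := Sum.elim (fun p => Sum.inr (Sum.inl p.1))
        (Sum.elim (fun p => Sum.inr (Sum.inr (Sum.inl p.1)))
          (fun _ => Sum.inr (Sum.inl ⟨0, hn₁⟩)))
  t := Sum.elim (fun p => Sum.inr (Sum.inr (Sum.inl p.2)))
        (Sum.elim (fun p => Sum.inr (Sum.inr (Sum.inr p.2)))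
          (fun _ => Sum.inr (Sum.inl ⟨0, hn₁⟩)))

/-!
Label every loop by `1` and every other edge by itself in the monoid `TruncWord` of words of
length at most two, in which two-letter words are identified along the loop-erased sides of the
relations of `R_N` and longer words vanish. In a quasi-acyclic, 2-path-bounded, triangle-free
graph parallel paths have loop-erasures of the same length, and without multiple edges a
relation whose loop-erased sides are single edges has equal sides; so every relation of `R`
holds for this labeling, and by completeness the diagram commutes. For a rhomboid `(a, b, c, d)`
this says that the words `ab` and `cd` are connected by a chain of relations of `R_N`. Disjoint
rhomboids give words `ab` distinct from all other words involved, and a rank count shows that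
`|R_N|` relations cannot connect more than `|R_N|` such pairs.
-/

open Finset Relation Submodule in
/-- The vectors `e (P i) - e (Q i)` of `ℚ^α` lie in the span of the `#T` vectors `e x - e y`,
`(x, y) ∈ T`, and are linearly independent because only the `i`-th one is nonzero at `P i`. -/
theorem Finset.card_le_card_of_eqvGen {α ι : Type*} {r : α → α → Prop}
    {T : Finset (α × α)} (hT : ∀ x y, r x y → (x, y) ∈ T) {F : Finset ι} {P Q : ι → α}
    (hPQ : ∀ i ∈ F, P i ≠ Q i) (hdisj : ∀ i ∈ F, ∀ j ∈ F, i ≠ j → P i ≠ P j ∧ P i ≠ Q j)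
    (hF : ∀ i ∈ F, EqvGen r (P i) (Q i)) : #F ≤ #T := by
  classical
  let δ : α × α → α → ℚ := fun xy => Pi.single xy.1 1 - Pi.single xy.2 1
  have hspan {x y : α} (h : EqvGen r x y) : δ (x, y) ∈ span ℚ (T.image δ : Set (α → ℚ)) := by
    induction h with
    | rel x y hxy => exact subset_span (Finset.mem_image_of_mem δ (hT x y hxy))
    | refl => simp [δ]
    | symm x y _ ih => simpa [δ] using neg_mem ih
    | trans x y z _ _ ih₁ ih₂ => simpa [δ] using add_mem ih₁ ih₂
  have hind : LinearIndependent ℚ fun i : F => δ (P i, Q i) := by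
    refine Fintype.linearIndependent_iff.mpr fun c hc i => ?_
    have hi := congrFun hc (P i)
    rw [Finset.sum_apply, Finset.sum_eq_single i] at hi
    · simpa [δ, hPQ i i.2] using hi
    · intro j _ hji
      obtain ⟨hP, hQ⟩ := hdisj i i.2 j j.2 (fun h => hji (Subtype.ext h).symm)
      simp [δ, hP, hQ]
    · simp
  calc #F = Fintype.card F := (Fintype.card_coe F).symm
    _ ≤ Fintype.card (T.image δ : Set (α → ℚ)) :=
        linearIndependent_le_span_aux' _ hind _ (by
          rintro _ ⟨i, rfl⟩
          exact hspan (hF i i.2))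
    _ = #(T.image δ) := by simp
    _ ≤ #T := Finset.card_image_le

/-- Words of length at most two over `α`, two-letter words taken modulo `r`, and every longer
word collapsed to `zero`. -/
inductive TruncWord (α : Type) (r : List α → List α → Prop) : Type
  | one : TruncWord α r
  | letter : α → TruncWord α r
  | pair : Quot r → TruncWord α r
  | zero : TruncWord α r

namespace TruncWord

variable {α : Type} {r : List α → List α → Prop}

def mul : TruncWord α r → TruncWord α r → TruncWord α r
  | one, x => x
  | x, one => x
  | letter a, letter b => pair (Quot.mk r [a, b])
  | _, _ => zero

instance : Monoid (TruncWord α r) where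
  mul := mul
  one := one
  mul_assoc a b c := by cases a <;> cases b <;> cases c <;> rfl
  one_mul a := by cases a <;> rfl
  mul_one a := by cases a <;> rfl

def ofList : List α → TruncWord α r
  | [] => one
  | [a] => letter a
  | [a, b] => pair (Quot.mk r [a, b])
  | _ :: _ :: _ :: _ => zero

theorem prod_map_letter (s : List α) : (s.map letter).prod = (ofList s : TruncWord α r) := by
  induction s with
  | nil => rfl
  | cons a s ih =>
    rw [List.map_cons, List.prod_cons, ih]
    rcases s with _ | ⟨b, _ | ⟨c, _ | ⟨d, s⟩⟩⟩ <;> rfl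

end TruncWord

namespace OrientedGraph

open scoped Classical

variable (G : OrientedGraph)

theorem isPath_iff {p : List G.E} {u v : G.V} :
    G.IsPath p u v ↔ p.IsChain (fun e f => G.t e = G.o f) ∧
      ((p = [] ∧ u = v) ∨ ∃ h : p ≠ [], u = G.o (p.head h) ∧ v = G.t (p.getLast h)) :=
  Iff.rfl

theorem isPath_nil {u v : G.V} : G.IsPath [] u v ↔ u = v := by
  simp [isPath_iff]

theorem isPath_cons {e : G.E} {p : List G.E} {u v : G.V} :
    G.IsPath (e :: p) u v ↔ u = G.o e ∧ G.IsPath p (G.t e) v := by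
  cases p with
  | nil => simp [isPath_iff, eq_comm]
  | cons f q =>
    simp only [isPath_iff, List.isChain_cons_cons, ne_eq, reduceCtorEq, false_and, false_or,
      not_false_eq_true, List.head_cons, List.getLast_cons, exists_const, eq_comm (a := G.t e)]
    tauto

theorem isPath_pair {a b : G.E} (h : G.t a = G.o b) : G.IsPath [a, b] (G.o a) (G.t b) := by
  simp [isPath_cons, isPath_nil, h]

variable {G}

theorem IsPath.append {p q : List G.E} {u v w : G.V} (hp : G.IsPath p u v)
    (hq : G.IsPath q v w) : G.IsPath (p ++ q) u w := by
  induction p generalizing u with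
  | nil => rwa [G.isPath_nil.mp hp]
  | cons e p ih =>
    obtain ⟨rfl, hp'⟩ := G.isPath_cons.mp hp
    exact G.isPath_cons.mpr ⟨rfl, ih hp'⟩

theorem IsPath.exists_split {p : List G.E} {u v : G.V} {e : G.E} (hp : G.IsPath p u v)
    (he : e ∈ p) : ∃ p₁ p₂, G.IsPath p₁ u (G.o e) ∧ G.IsPath p₂ (G.t e) v := by
  induction p generalizing u with
  | nil => simp at he
  | cons f q ih =>
    obtain ⟨rfl, hq⟩ := G.isPath_cons.mp hp
    rcases List.mem_cons.mp he with rfl | he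
    · exact ⟨[], q, G.isPath_nil.mpr rfl, hq⟩
    · obtain ⟨p₁, p₂, h₁, h₂⟩ := ih hq he
      exact ⟨f :: p₁, p₂, G.isPath_cons.mpr ⟨rfl, h₁⟩, h₂⟩

variable (G)

noncomputable def eraseLoops (s : List G.E) : List G.E :=
  s.filter fun e => G.o e ≠ G.t e

theorem mem_eraseLoops {e : G.E} {s : List G.E} :
    e ∈ G.eraseLoops s ↔ e ∈ s ∧ G.o e ≠ G.t e := by
  simp [eraseLoops]

theorem eraseLoops_cons_of_loop {e : G.E} (h : G.o e = G.t e) (s : List G.E) :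
    G.eraseLoops (e :: s) = G.eraseLoops s := by
  simp [eraseLoops, h]

theorem eraseLoops_cons_of_not_loop {e : G.E} (h : G.o e ≠ G.t e) (s : List G.E) :
    G.eraseLoops (e :: s) = e :: G.eraseLoops s := by
  simp [eraseLoops, h]

theorem bothSidesNonLoop_iff (r : List G.E × List G.E) :
    G.BothSidesNonLoop r ↔ G.eraseLoops r.1 ≠ [] ∧ G.eraseLoops r.2 ≠ [] := by
  simp [BothSidesNonLoop, List.eq_nil_iff_forall_not_mem, mem_eraseLoops]

variable {G}

theorem IsPath.eraseLoops {p : List G.E} {u v : G.V} (hp : G.IsPath p u v) :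
    G.IsPath (G.eraseLoops p) u v := by
  induction p generalizing u with
  | nil => exact hp
  | cons e q ih =>
    obtain ⟨rfl, hq⟩ := G.isPath_cons.mp hp
    by_cases h : G.o e = G.t e
    · rw [G.eraseLoops_cons_of_loop h, h]
      exact ih hq
    · rw [G.eraseLoops_cons_of_not_loop h]
      exact G.isPath_cons.mpr ⟨rfl, ih hq⟩

theorem IsPath.eq_of_eraseLoops_eq_nil {p : List G.E} {u v : G.V} (hp : G.IsPath p u v)
    (h : G.eraseLoops p = []) : u = v :=
  G.isPath_nil.mp (h ▸ hp.eraseLoops)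

theorem QuasiAcyclic.eraseLoops_eq_nil (hqa : G.QuasiAcyclic) {p : List G.E} {u : G.V}
    (hp : G.IsPath p u u) : G.eraseLoops p = [] := by
  refine List.eq_nil_iff_forall_not_mem.mpr fun e he => ?_
  obtain ⟨hep, hne⟩ := G.mem_eraseLoops.mp he
  obtain ⟨p₁, p₂, h₁, h₂⟩ := hp.exists_split hep
  exact hqa _ _ hne [e] (p₂ ++ p₁) (by simp [isPath_cons, isPath_nil])
    (h₂.append h₁)

theorem TwoPathBounded.length_eraseLoops_le (hpb : G.TwoPathBounded) {p : List G.E}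
    {u v : G.V} (hp : G.IsPath p u v) : (G.eraseLoops p).length ≤ 2 :=
  hpb _ u v hp.eraseLoops fun _ he => (G.mem_eraseLoops.mp he).2

theorem IsPath.hasTriangle {p q : List G.E} {u v : G.V} {e x y : G.E} (hp : G.IsPath p u v)
    (hq : G.IsPath q u v) (he : G.eraseLoops p = [e]) (hxy : G.eraseLoops q = [x, y]) :
    G.HasTriangle := by
  have hnl : ∀ f ∈ G.eraseLoops p ++ G.eraseLoops q, G.o f ≠ G.t f := fun f hf => by
    rcases List.mem_append.mp hf with hf | hf <;> exact (G.mem_eraseLoops.mp hf).2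
  have hp' := he ▸ hp.eraseLoops
  have hq' := hxy ▸ hq.eraseLoops
  rw [he, hxy] at hnl
  simp only [isPath_cons, isPath_nil] at hp' hq'
  exact ⟨e, x, y, hp'.1.symm.trans hq'.1, hq'.2.1, hq'.2.2.trans hp'.2.symm,
    hnl e (by simp), hnl x (by simp), hnl y (by simp)⟩

theorem length_eraseLoops_eq_of_isPath (hqa : G.QuasiAcyclic) (hpb : G.TwoPathBounded)
    (htr : ¬G.HasTriangle) {p q : List G.E} {u v : G.V} (hp : G.IsPath p u v)
    (hq : G.IsPath q u v) : (G.eraseLoops p).length = (G.eraseLoops q).length := by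
  by_cases huv : u = v
  · subst huv
    rw [hqa.eraseLoops_eq_nil hp, hqa.eraseLoops_eq_nil hq]
  have hpos {s : List G.E} (hs : G.IsPath s u v) : 0 < (G.eraseLoops s).length :=
    List.length_pos_iff.mpr fun h => huv (hs.eq_of_eraseLoops_eq_nil h)
  have hmix {s s' : List G.E} (hs : G.IsPath s u v) (hs' : G.IsPath s' u v)
      (h₁ : (G.eraseLoops s).length = 1) : (G.eraseLoops s').length ≠ 2 := fun h₂ => by
    obtain ⟨e, he⟩ := List.length_eq_one_iff.mp h₁
    obtain ⟨x, y, hxy⟩ := List.length_eq_two.mp h₂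
    exact htr (hs.hasTriangle hs' he hxy)
  have := hmix hp hq
  have := hmix hq hp
  have := hpos hp
  have := hpos hq
  have := hpb.length_eraseLoops_le hp
  have := hpb.length_eraseLoops_le hq
  omega

variable (G)

@[simp] theorem labelProd_nil {M : Type} [Monoid M] (l : G.E → M) : G.labelProd l [] = 1 :=
  rfl

@[simp] theorem labelProd_cons {M : Type} [Monoid M] (l : G.E → M) (e : G.E) (s : List G.E) :
    G.labelProd l (e :: s) = l e * G.labelProd l s :=
  List.prod_cons

theorem labelProd_eraseLoops {M : Type} [Monoid M] {l : G.E → M}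
    (hl : ∀ e, G.o e = G.t e → l e = 1) (s : List G.E) :
    G.labelProd l (G.eraseLoops s) = G.labelProd l s := by
  induction s with
  | nil => rfl
  | cons e s ih =>
    by_cases h : G.o e = G.t e
    · rw [G.eraseLoops_cons_of_loop h, ih, labelProd_cons, hl e h, one_mul]
    · rw [G.eraseLoops_cons_of_not_loop h, labelProd_cons, labelProd_cons, ih]

noncomputable def lengthLabel (e : G.E) : Multiplicative ℕ :=
  Multiplicative.ofAdd (if G.o e = G.t e then 0 else 1)

theorem labelProd_lengthLabel (s : List G.E) :
    G.labelProd G.lengthLabel s = Multiplicative.ofAdd (G.eraseLoops s).length := by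
  induction s with
  | nil => rfl
  | cons e s ih =>
    by_cases h : G.o e = G.t e
    · simp [G.eraseLoops_cons_of_loop h, ih, lengthLabel, h]
    · simp [G.eraseLoops_cons_of_not_loop h, ih, lengthLabel, h, ← ofAdd_add, add_comm]

def potentialLabel (g : G.V → ℤ) (e : G.E) : Multiplicative ℤ :=
  Multiplicative.ofAdd (g (G.t e) - g (G.o e))

variable {G}

theorem isCommutative_lengthLabel (hqa : G.QuasiAcyclic) (hpb : G.TwoPathBounded)
    (htr : ¬G.HasTriangle) : G.IsCommutative G.lengthLabel := fun _ _ _ _ hp hq => by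
  rw [labelProd_lengthLabel, labelProd_lengthLabel,
    length_eraseLoops_eq_of_isPath hqa hpb htr hp hq]

theorem IsPath.labelProd_potentialLabel (g : G.V → ℤ) {p : List G.E} {u v : G.V}
    (hp : G.IsPath p u v) : G.labelProd (G.potentialLabel g) p = Multiplicative.ofAdd (g v - g u) := by
  induction p generalizing u with
  | nil => simp [G.isPath_nil.mp hp]
  | cons e q ih =>
    obtain ⟨rfl, hq⟩ := G.isPath_cons.mp hp
    rw [labelProd_cons, ih hq, potentialLabel, ← ofAdd_add, sub_add_sub_cancel']

theorem isCommutative_potentialLabel (g : G.V → ℤ) : G.IsCommutative (G.potentialLabel g) :=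
  fun _ _ _ _ hp hq => by rw [hp.labelProd_potentialLabel, hq.labelProd_potentialLabel]

theorem eq_and_eq_of_forall_sub_eq_sub {V : Type*} {a b c d : V} (hab : a ≠ b)
    (h : ∀ g : V → ℤ, g b - g a = g d - g c) : a = c ∧ b = d := by
  classical
  have hb := h fun w => if w = b then 1 else 0
  have ha := h fun w => if w = a then 1 else 0
  simp only at ha hb
  split_ifs at ha hb <;> simp_all

theorem IsComplete.labelProd_eq {R : Finset (List G.E × List G.E)} (hR : G.IsComplete R)
    {M : Type} [Monoid M] {l : G.E → M} (hl : G.IsCommutative l) {r : List G.E × List G.E}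
    (hr : r ∈ R) : G.labelProd l r.1 = G.labelProd l r.2 :=
  (hR M l).mp hl r hr

theorem IsComplete.length_eraseLoops_eq {R : Finset (List G.E × List G.E)}
    (hR : G.IsComplete R) (hqa : G.QuasiAcyclic) (hpb : G.TwoPathBounded)
    (htr : ¬G.HasTriangle) {r : List G.E × List G.E} (hr : r ∈ R) :
    (G.eraseLoops r.1).length = (G.eraseLoops r.2).length := by
  have h := hR.labelProd_eq (isCommutative_lengthLabel hqa hpb htr) hr
  rwa [labelProd_lengthLabel, labelProd_lengthLabel, Multiplicative.ofAdd.injective.eq_iff] at h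

theorem IsComplete.eq_of_eraseLoops_eq_singleton {R : Finset (List G.E × List G.E)}
    (hR : G.IsComplete R) (hme : ¬G.HasMultipleEdges) {r : List G.E × List G.E} (hr : r ∈ R)
    {e f : G.E} (he : G.eraseLoops r.1 = [e]) (hf : G.eraseLoops r.2 = [f]) : e = f := by
  by_contra hef
  have hloop : G.o e ≠ G.t e := (G.mem_eraseLoops.mp (he ▸ List.mem_singleton_self e)).2
  have hpot (g : G.V → ℤ) : g (G.t e) - g (G.o e) = g (G.t f) - g (G.o f) := by
    have h := hR.labelProd_eq (isCommutative_potentialLabel g) hr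
    have hl : ∀ e, G.o e = G.t e → G.potentialLabel g e = 1 := fun e h => by
      simp [potentialLabel, h]
    rw [← G.labelProd_eraseLoops hl r.1, ← G.labelProd_eraseLoops hl r.2, he, hf] at h
    simp only [labelProd_cons, labelProd_nil, mul_one, potentialLabel] at h
    exact Multiplicative.ofAdd.injective h
  obtain ⟨ho, ht⟩ := eq_and_eq_of_forall_sub_eq_sub hloop hpot
  exact hme ⟨e, f, hef, ht, ho, hloop.symm⟩

variable (G)

def erasedRelation (R : Finset (List G.E × List G.E)) (s s' : List G.E) : Prop :=
  ∃ r ∈ R, G.BothSidesNonLoop r ∧ G.eraseLoops r.1 = s ∧ G.eraseLoops r.2 = s'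

noncomputable def wordLabel (R : Finset (List G.E × List G.E)) (e : G.E) :
    TruncWord G.E (G.erasedRelation R) :=
  if G.o e = G.t e then 1 else .letter e

theorem labelProd_wordLabel (R : Finset (List G.E × List G.E)) (s : List G.E) :
    G.labelProd (G.wordLabel R) s = .ofList (G.eraseLoops s) := by
  rw [← G.labelProd_eraseLoops (fun _ h => by simp [wordLabel, h]), labelProd, ← TruncWord.prod_map_letter]
  exact congrArg List.prod (List.map_congr_left fun _ he => if_neg (G.mem_eraseLoops.mp he).2)

variable {G}

/-- A relation of `R` holds in `TruncWord` once its loop-erased sides have the same length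
(`lengthLabel`), coincide when they are single edges (`potentialLabel`), and are related when
they have two edges. -/
theorem IsComplete.isCommutative_wordLabel {R : Finset (List G.E × List G.E)}
    (hR : G.IsComplete R) (hqa : G.QuasiAcyclic) (hpb : G.TwoPathBounded)
    (hme : ¬G.HasMultipleEdges) (htr : ¬G.HasTriangle) : G.IsCommutative (G.wordLabel R) := by
  refine (hR _ _).mpr fun r hr => ?_
  have hlen := hR.length_eraseLoops_eq hqa hpb htr hr
  rw [labelProd_wordLabel, labelProd_wordLabel]
  rcases h₁ : G.eraseLoops r.1 with _ | ⟨a, _ | ⟨b, _ | ⟨_, _⟩⟩⟩ <;>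
    rcases h₂ : G.eraseLoops r.2 with _ | ⟨c, _ | ⟨d, _ | ⟨_, _⟩⟩⟩ <;>
    simp only [h₁, h₂, List.length_cons, List.length_nil] at hlen <;> try omega
  · rfl
  · rw [hR.eq_of_eraseLoops_eq_singleton hme hr h₁ h₂]
  · have hN : G.BothSidesNonLoop r := (G.bothSidesNonLoop_iff r).mpr (by simp [h₁, h₂])
    exact congrArg TruncWord.pair (Quot.sound ⟨r, hr, hN, h₁, h₂⟩)
  · rfl

theorem IsRhomboid.eqvGen_erasedRelation {R : Finset (List G.E × List G.E)}
    (hcomm : G.IsCommutative (G.wordLabel R)) {ρ : G.E × G.E × G.E × G.E} (hρ : G.IsRhomboid ρ) :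
    Relation.EqvGen (G.erasedRelation R) [ρ.1, ρ.2.1] [ρ.2.2.1, ρ.2.2.2] := by
  obtain ⟨a, b, c, d⟩ := ρ
  obtain ⟨hac, hbd, hab, hcd, ha, hoad, -, -, htad, hd⟩ := hρ
  have h := hcomm _ _ _ _ (G.isPath_pair hab) (hac ▸ hbd ▸ G.isPath_pair hcd)
  have hb : G.o b ≠ G.t b := by rwa [← hab, hbd]
  have hc : G.o c ≠ G.t c := by rwa [← hac, hcd]
  rw [labelProd_wordLabel, labelProd_wordLabel, G.eraseLoops_cons_of_not_loop ha,
    G.eraseLoops_cons_of_not_loop hb, G.eraseLoops_cons_of_not_loop hc,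
    G.eraseLoops_cons_of_not_loop hd] at h
  exact Quot.eqvGen_exact (TruncWord.pair.inj h)

theorem IsRhomboid.sides_ne {ρ : G.E × G.E × G.E × G.E} (hρ : G.IsRhomboid ρ) :
    [ρ.1, ρ.2.1] ≠ [ρ.2.2.1, ρ.2.2.2] := fun h => by
  obtain ⟨-, -, -, hcd, -, -, -, htad, -, -⟩ := hρ
  exact htad (by rw [List.cons.inj h |>.1, hcd])

theorem RhDisjoint.sides_ne {ρ ρ' : G.E × G.E × G.E × G.E} (h : G.RhDisjoint ρ ρ') :
    [ρ.1, ρ.2.1] ≠ [ρ'.1, ρ'.2.1] ∧ [ρ.1, ρ.2.1] ≠ [ρ'.2.2.1, ρ'.2.2.2] := by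
  obtain ⟨h₁, h₂, -, -⟩ := h
  simpa only [ne_eq, List.cons.injEq, and_true, not_and_or] using ⟨h₁, h₂⟩

end OrientedGraph

/-- Theorem: for a complete system of relations `R` of a quasi-acyclic, 2-path-bounded
graph without multiple edges and triangles, `|R_N| ≥ 𝔯𝔥(G)`, where `R_N` consists of the
relations whose both sides contain a non-loop edge. -/
theorem card_RN_ge_rhNum (G : OrientedGraph) (hqa : G.QuasiAcyclic)
    (hpb : G.TwoPathBounded) (hme : ¬ G.HasMultipleEdges) (htr : ¬ G.HasTriangle)
    (R : Finset (List G.E × List G.E)) (hR : G.IsComplete R) :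
    G.rhNum ≤
      Set.ncard {r : List G.E × List G.E | r ∈ R ∧ G.BothSidesNonLoop r} := by
  classical
  have hcomm := hR.isCommutative_wordLabel hqa hpb hme htr
  let RN := R.filter G.BothSidesNonLoop
  have hRN : {r | r ∈ R ∧ G.BothSidesNonLoop r} = (RN : Set (List G.E × List G.E)) := by
    ext; simp [RN]
  rw [hRN, Set.ncard_coe_finset]
  refine csSup_le' ?_
  rintro _ ⟨F, hrh, hdis, rfl⟩
  calc F.card ≤ (RN.image fun r => (G.eraseLoops r.1, G.eraseLoops r.2)).card :=
        Finset.card_le_card_of_eqvGen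
          (fun _ _ ⟨r, hr, hN, h₁, h₂⟩ => Finset.mem_image.mpr
            ⟨r, Finset.mem_filter.mpr ⟨hr, hN⟩, by rw [h₁, h₂]⟩)
          (fun ρ hρ => (hrh ρ hρ).sides_ne)
          (fun ρ hρ ρ' hρ' hne => (hdis ρ hρ ρ' hρ' hne).sides_ne)
          (fun ρ hρ => (hrh ρ hρ).eqvGen_erasedRelation hcomm)
    _ ≤ RN.card := Finset.card_image_le
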